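/- arXiv:2208.09616 — 3 statements merged into one kernel-verified Lean document; each statement's English description precedes it below -/
import Mathlib

section
/- Let U, Z be Hilbert spaces, a: U×U→ℝ bounded and coercive, b: Z×U→ℝ bounded, d: U×U→ℝ bounded positive semi-definite, e: Z×Z→ℝ bounded and coercive. Then the bilinear form ((u,z),(v,y)) ↦ d(u,v) + e(z,y) is coercive on the kernel K := {(u,z) ∈ U×Z : a(u,q) + b(z,q) = 0 for all q ∈ U}; i.e., there exists γ>0 such that d(u,u) + e(z,z) ≥ γ(‖u‖²_U + ‖z‖²_Z) for all (u,z) ∈ K. -/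
/-!
On the kernel, testing the constraint with `q = u` gives `a(u,u) = -b(z,u)`, so coercivity of `a`
and boundedness of `b` yield `α‖u‖ ≤ ‖b‖‖z‖`. Hence `‖u‖² + ‖z‖²` is controlled by `‖z‖²` alone,
which coercivity of `e` bounds by `e(z,z) ≤ d(u,u) + e(z,z)`.
-/

section

variable {E F : Type*} [SeminormedAddCommGroup E] [NormedSpace ℝ E]
  [SeminormedAddCommGroup F] [NormedSpace ℝ F]

lemma ContinuousLinearMap.neg_apply_apply_le (b : F →L[ℝ] E →L[ℝ] ℝ) (z : F) (u : E) :
    -b z u ≤ ‖b‖ * ‖z‖ * ‖u‖ :=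
  (neg_le_abs _).trans (b.le_opNorm₂ z u)

lemma mul_norm_le_of_coercive_of_apply_add_eq_zero (a : E →L[ℝ] E →L[ℝ] ℝ)
    (b : F →L[ℝ] E →L[ℝ] ℝ) {α : ℝ} (hacoer : ∀ u : E, α * ‖u‖ ^ 2 ≤ a u u) {u : E} {z : F}
    (hker : a u u + b z u = 0) :
    α * ‖u‖ ≤ ‖b‖ * ‖z‖ := by
  have h : α * ‖u‖ * ‖u‖ ≤ ‖b‖ * ‖z‖ * ‖u‖ :=
    calc α * ‖u‖ * ‖u‖ = α * ‖u‖ ^ 2 := by ring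
      _ ≤ a u u := hacoer u
      _ = -b z u := by linarith
      _ ≤ ‖b‖ * ‖z‖ * ‖u‖ := b.neg_apply_apply_le z u
  rcases (norm_nonneg u).eq_or_lt with hu | hu
  · rw [← hu, mul_zero]
    positivity
  · exact le_of_mul_le_mul_right h hu

end

theorem stmt1_general
    {U Z : Type*}
    [NormedAddCommGroup U] [InnerProductSpace ℝ U]
    [NormedAddCommGroup Z] [InnerProductSpace ℝ Z]
    (a : U →L[ℝ] U →L[ℝ] ℝ) (b : Z →L[ℝ] U →L[ℝ] ℝ)
    (d : U →L[ℝ] U →L[ℝ] ℝ) (e : Z →L[ℝ] Z →L[ℝ] ℝ)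
    (α ε : ℝ) (hα : 0 < α) (hε : 0 < ε)
    (hacoer : ∀ u : U, α * ‖u‖ ^ 2 ≤ a u u)
    (hecoer : ∀ z : Z, ε * ‖z‖ ^ 2 ≤ e z z)
    (hdpos : ∀ u : U, 0 ≤ d u u) :
    ∃ γ > 0, ∀ (u : U) (z : Z), (∀ q : U, a u q + b z q = 0) →
      γ * (‖u‖ ^ 2 + ‖z‖ ^ 2) ≤ d u u + e z z := by
  set K := ‖b‖ / α
  have hK : 0 < 1 + K ^ 2 := by positivity
  refine ⟨ε / (1 + K ^ 2), by positivity, fun u z hker => ?_⟩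
  have hu : ‖u‖ ≤ K * ‖z‖ := by
    rw [div_mul_eq_mul_div, le_div_iff₀ hα, mul_comm]
    exact mul_norm_le_of_coercive_of_apply_add_eq_zero a b hacoer (hker u)
  have hsum : ‖u‖ ^ 2 + ‖z‖ ^ 2 ≤ (1 + K ^ 2) * ‖z‖ ^ 2 := by
    nlinarith [pow_le_pow_left₀ (norm_nonneg u) hu 2]
  calc ε / (1 + K ^ 2) * (‖u‖ ^ 2 + ‖z‖ ^ 2)
      ≤ ε / (1 + K ^ 2) * ((1 + K ^ 2) * ‖z‖ ^ 2) := by gcongr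
    _ = ε * ‖z‖ ^ 2 := by field_simp
    _ ≤ e z z := hecoer z
    _ ≤ d u u + e z z := le_add_of_nonneg_left (hdpos u)

/-- the bilinear form ((u,z),(v,y)) ↦ d(u,v)+e(z,y) is coercive on the
kernel {(u,z) : a(u,q)+b(z,q)=0 ∀q} when a, e are bounded coercive, b bounded, d
positive semi-definite. -/
theorem stmt1
    {U Z : Type*}
    [NormedAddCommGroup U] [InnerProductSpace ℝ U] [CompleteSpace U]
    [NormedAddCommGroup Z] [InnerProductSpace ℝ Z] [CompleteSpace Z]
    (a : U →L[ℝ] U →L[ℝ] ℝ) (b : Z →L[ℝ] U →L[ℝ] ℝ)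
    (d : U →L[ℝ] U →L[ℝ] ℝ) (e : Z →L[ℝ] Z →L[ℝ] ℝ)
    (α ε : ℝ) (hα : 0 < α) (hε : 0 < ε)
    (hacoer : ∀ u : U, α * ‖u‖ ^ 2 ≤ a u u)
    (hecoer : ∀ z : Z, ε * ‖z‖ ^ 2 ≤ e z z)
    (hdpos : ∀ u : U, 0 ≤ d u u) :
    ∃ γ > 0, ∀ (u : U) (z : Z), (∀ q : U, a u q + b z q = 0) →
      γ * (‖u‖ ^ 2 + ‖z‖ ^ 2) ≤ d u u + e z z :=
  stmt1_general a b d e α ε hα hε hacoer hecoer hdpos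
end

section
/- Let U, Z be Hilbert spaces, a: U×U→ℝ bounded coercive, b: Z×U→ℝ bounded, d: U×U→ℝ bounded positive semi-definite, e: Z×Z→ℝ bounded coercive, and f: U→ℝ, g: U×Z→ℝ bounded linear forms. Then there exists a unique (u,z,p) ∈ U×Z×U solving the saddle-point problem: d(u,v) + e(z,y) + a(v,p) + b(y,p) = g(v,y) for all (v,y) ∈ U×Z, and a(u,q) + b(z,q) = f(q) for all q ∈ U. Moreover ‖u‖_U + ‖z‖_Z + ‖p‖_U ≤ C(‖f‖_{U'} + ‖g‖_{(U×Z)'}) with C depending only on the continuity constants of a,b,d,e and the coercivity constants of a,e. -/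
/-!
Testing the system with `(v, y) = (p, 0)`, with `q = u`, and with `(v, y) = (u, z)` together with
`q = p`, coercivity of `a` and `e` and `d ≥ 0` give `α‖u‖ ≤ ‖f‖ + k‖z‖`, `α‖p‖ ≤ ‖g‖ + k‖u‖` and
`ε‖z‖² ≤ (‖f‖ + ‖g‖)(‖u‖ + ‖z‖ + ‖p‖)`, where `k` bounds `b` and `d`; these combine into the
stability bound, and uniqueness follows from it by linearity. For existence, Lax–Milgram for `a`
eliminates `u = A⁻¹(f - Bz)` and then `p`; what is left for `z` is a problem for the Schur
complement `e(z, y) + d(Wz, Wy)`, `W = A⁻¹B`, which is coercive because `d ≥ 0`.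
-/

open InnerProductSpace ContinuousLinearMap

theorem le_of_mul_sq_le_mul {α x R : ℝ} (hR : 0 ≤ R) (hx : 0 ≤ x) (h : α * x ^ 2 ≤ R * x) :
    α * x ≤ R := by
  rcases hx.eq_or_lt with rfl | hx
  · simpa using hR
  · exact le_of_mul_le_mul_right (by nlinarith) hx

theorem le_add_of_mul_sq_le {ε c N z : ℝ} (hε : 0 < ε) (hc : 0 ≤ c) (hN : 0 ≤ N)
    (h : ε * z ^ 2 ≤ c * (N + z)) : z ≤ N + 2 * c / ε := by
  rcases le_or_gt z N with hzN | hNz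
  · have : 0 ≤ 2 * c / ε := by positivity
    linarith
  · have hz : 0 ≤ z := hN.trans hNz.le
    have : ε * z ≤ 2 * c := le_of_mul_sq_le_mul (by positivity) hz (by nlinarith)
    have : z ≤ 2 * c / ε := by rw [le_div_iff₀ hε]; linarith
    linarith

theorem add_add_le_of_mul_le {α k N u z p : ℝ} (hα : 0 < α) (hk : 0 ≤ k) (hN : 0 ≤ N)
    (hu : 0 ≤ u) (hz : 0 ≤ z) (hup : α * u ≤ N + k * z) (hpu : α * p ≤ N + k * u) :
    u + z + p ≤ (1 + (1 + k) / α) ^ 2 * (N + z) := by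
  set l := (1 + k) / α
  have hl : 0 ≤ l := by positivity
  have hu' : u ≤ l * (N + z) := by
    rw [div_mul_eq_mul_div, le_div_iff₀ hα]; nlinarith
  have hp' : p ≤ l * (N + u) := by
    rw [div_mul_eq_mul_div, le_div_iff₀ hα]; nlinarith
  nlinarith [mul_le_mul_of_nonneg_left hu' hl]

/-- With `l = (1 + k) / α` and `m = (1 + l) ^ 2`, the estimates give `‖u‖ + ‖z‖ + ‖p‖ ≤ m (N + ‖z‖)`
and `‖z‖ ≤ (1 + 2 m / ε) N` for `N = ‖f‖ + ‖g‖`. -/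
noncomputable def stabilityConst (α ε k : ℝ) : ℝ :=
  2 * (1 + (1 + k) / α) ^ 2 * (1 + (1 + (1 + k) / α) ^ 2 / ε)

theorem stabilityConst_pos {α ε k : ℝ} (hα : 0 < α) (hε : 0 < ε) (hk : 0 ≤ k) :
    0 < stabilityConst α ε k := by
  unfold stabilityConst; positivity

theorem add_add_le_stabilityConst_mul {α ε k N u z p : ℝ} (hα : 0 < α) (hε : 0 < ε) (hk : 0 ≤ k)
    (hN : 0 ≤ N) (hu : 0 ≤ u) (hz : 0 ≤ z) (hup : α * u ≤ N + k * z) (hpu : α * p ≤ N + k * u)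
    (hz2 : ε * z ^ 2 ≤ N * (u + z + p)) :
    u + z + p ≤ stabilityConst α ε k * N := by
  set m := (1 + (1 + k) / α) ^ 2
  have hm : 0 ≤ m := by positivity
  have hsum := add_add_le_of_mul_le hα hk hN hu hz hup hpu
  have hz' : z ≤ N + 2 * (m * N) / ε :=
    le_add_of_mul_sq_le hε (by positivity) hN <| by
      calc ε * z ^ 2 ≤ N * (u + z + p) := hz2
        _ ≤ N * (m * (N + z)) := by gcongr
        _ = m * N * (N + z) := by ring
  calc u + z + p ≤ m * (N + z) := hsum
    _ ≤ m * (N + (N + 2 * (m * N) / ε)) := by gcongr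
    _ = stabilityConst α ε k * N := by unfold stabilityConst; ring

theorem ContinuousLinearMap.apply_le_opNorm_mul {E : Type*} [SeminormedAddCommGroup E]
    [NormedSpace ℝ E] (ℓ : E →L[ℝ] ℝ) (x : E) : ℓ x ≤ ‖ℓ‖ * ‖x‖ :=
  (le_abs_self _).trans (ℓ.le_opNorm x)

section LaxMilgram

variable {V : Type*} [NormedAddCommGroup V] [InnerProductSpace ℝ V] [CompleteSpace V]
  {B : V →L[ℝ] V →L[ℝ] ℝ}

omit [CompleteSpace V] in
theorem IsCoercive.flip (hB : IsCoercive B) : IsCoercive B.flip :=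
  hB

noncomputable def IsCoercive.solve (hB : IsCoercive B) : (V →L[ℝ] ℝ) →L[ℝ] V where
  toFun ℓ := hB.continuousLinearEquivOfBilin.symm ((toDual ℝ V).symm ℓ)
  map_add' _ _ := by simp
  map_smul' _ _ := by simp
  cont := hB.continuousLinearEquivOfBilin.symm.continuous.comp (toDual ℝ V).symm.continuous

@[simp]
theorem IsCoercive.apply_solve (hB : IsCoercive B) (ℓ : V →L[ℝ] ℝ) (v : V) :
    B (hB.solve ℓ) v = ℓ v := by
  rw [← hB.continuousLinearEquivOfBilin_apply]
  simp [IsCoercive.solve]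

end LaxMilgram

section SaddlePoint

variable {U Z : Type*} [NormedAddCommGroup U] [InnerProductSpace ℝ U]
  [NormedAddCommGroup Z] [InnerProductSpace ℝ Z]
  {a : U →L[ℝ] U →L[ℝ] ℝ} {b : Z →L[ℝ] U →L[ℝ] ℝ} {d : U →L[ℝ] U →L[ℝ] ℝ}
  {e : Z →L[ℝ] Z →L[ℝ] ℝ} {f f' : U →L[ℝ] ℝ} {g g' : U × Z →L[ℝ] ℝ}
  {u u' p p' : U} {z z' : Z}

variable (a b d e f g) in
def IsSaddlePoint (u : U) (z : Z) (p : U) : Prop :=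
  (∀ (v : U) (y : Z), d u v + e z y + a v p + b y p = g (v, y)) ∧
    ∀ q : U, a u q + b z q = f q

theorem IsSaddlePoint.sub (h : IsSaddlePoint a b d e f g u z p)
    (h' : IsSaddlePoint a b d e f' g' u' z' p') :
    IsSaddlePoint a b d e (f - f') (g - g') (u - u') (z - z') (p - p') := by
  refine ⟨fun v y => ?_, fun q => ?_⟩
  · simp only [map_sub, sub_apply]
    linarith [h.1 v y, h'.1 v y]
  · simp only [map_sub, sub_apply]
    linarith [h.2 q, h'.2 q]

theorem IsSaddlePoint.eq_of_stability {C : ℝ}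
    (hstab : ∀ (f : U →L[ℝ] ℝ) (g : U × Z →L[ℝ] ℝ) u z p, IsSaddlePoint a b d e f g u z p →
      ‖u‖ + ‖z‖ + ‖p‖ ≤ C * (‖f‖ + ‖g‖))
    (h : IsSaddlePoint a b d e f g u z p) (h' : IsSaddlePoint a b d e f g u' z' p') :
    (u, z, p) = (u', z', p') := by
  have hle := hstab _ _ _ _ _ (h.sub h')
  simp only [sub_self, norm_zero, opNorm_zero, add_zero, mul_zero] at hle
  have := norm_nonneg (u - u'); have := norm_nonneg (z - z'); have := norm_nonneg (p - p')
  simp only [Prod.mk.injEq, ← sub_eq_zero (a := u), ← sub_eq_zero (a := z), ← sub_eq_zero (a := p)]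
  exact ⟨norm_eq_zero.mp (by linarith), norm_eq_zero.mp (by linarith),
    norm_eq_zero.mp (by linarith)⟩

theorem IsSaddlePoint.norm_add_add_le {α ε k : ℝ} (hα : 0 < α) (hε : 0 < ε) (hk : 0 ≤ k)
    (hb : ∀ (z : Z) (v : U), |b z v| ≤ k * ‖z‖ * ‖v‖) (hd : ∀ u v : U, |d u v| ≤ k * ‖u‖ * ‖v‖)
    (ha : ∀ u : U, α * ‖u‖ ^ 2 ≤ a u u) (he : ∀ z : Z, ε * ‖z‖ ^ 2 ≤ e z z)
    (hd₀ : ∀ u : U, 0 ≤ d u u) (h : IsSaddlePoint a b d e f g u z p) :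
    ‖u‖ + ‖z‖ + ‖p‖ ≤ stabilityConst α ε k * (‖f‖ + ‖g‖) := by
  obtain ⟨hvy, hq⟩ := h
  have hu : α * ‖u‖ ≤ ‖f‖ + k * ‖z‖ := by
    refine le_of_mul_sq_le_mul (by positivity) (norm_nonneg u) ?_
    calc α * ‖u‖ ^ 2 ≤ a u u := ha u
      _ = f u - b z u := by linarith [hq u]
      _ ≤ ‖f‖ * ‖u‖ + k * ‖z‖ * ‖u‖ := by
        linarith [f.apply_le_opNorm_mul u, neg_le_of_abs_le (hb z u)]
      _ = (‖f‖ + k * ‖z‖) * ‖u‖ := by ring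
  have hp : α * ‖p‖ ≤ ‖g‖ + k * ‖u‖ := by
    refine le_of_mul_sq_le_mul (by positivity) (norm_nonneg p) ?_
    calc α * ‖p‖ ^ 2 ≤ a p p := ha p
      _ = g (p, 0) - d u p := by
        have := hvy p 0
        simp only [map_zero, zero_apply, add_zero] at this
        linarith
      _ ≤ ‖g‖ * ‖p‖ + k * ‖u‖ * ‖p‖ := by
        have : g (p, 0) ≤ ‖g‖ * ‖p‖ := by simpa using g.apply_le_opNorm_mul (p, 0)
        linarith [neg_le_of_abs_le (hd u p)]
      _ = (‖g‖ + k * ‖u‖) * ‖p‖ := by ring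
  have hz : ε * ‖z‖ ^ 2 ≤ (‖f‖ + ‖g‖) * (‖u‖ + ‖z‖ + ‖p‖) := by
    have hgu : g (u, z) ≤ ‖g‖ * (‖u‖ + ‖z‖) := by
      refine (g.apply_le_opNorm_mul (u, z)).trans (mul_le_mul_of_nonneg_left ?_ (norm_nonneg g))
      simp [le_add_of_nonneg_right (norm_nonneg z), le_add_of_nonneg_left (norm_nonneg u)]
    calc ε * ‖z‖ ^ 2 ≤ e z z := he z
      _ = g (u, z) - f p - d u u := by linarith [hvy u z, hq p]
      _ ≤ ‖g‖ * (‖u‖ + ‖z‖) + ‖f‖ * ‖p‖ := by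
        linarith [hd₀ u, neg_le_of_abs_le (f.le_opNorm p)]
      _ ≤ (‖f‖ + ‖g‖) * (‖u‖ + ‖z‖ + ‖p‖) := by
        nlinarith [norm_nonneg f, norm_nonneg g, norm_nonneg u, norm_nonneg z, norm_nonneg p]
  exact add_add_le_stabilityConst_mul hα hε hk (by positivity) (norm_nonneg u) (norm_nonneg z)
    (hu.trans (by linarith [norm_nonneg g])) (hp.trans (by linarith [norm_nonneg f])) hz

end SaddlePoint

section Existence

variable {U Z : Type*} [NormedAddCommGroup U] [InnerProductSpace ℝ U] [CompleteSpace U]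
  [NormedAddCommGroup Z] [InnerProductSpace ℝ Z] [CompleteSpace Z]
  {a : U →L[ℝ] U →L[ℝ] ℝ} {b : Z →L[ℝ] U →L[ℝ] ℝ} {d : U →L[ℝ] U →L[ℝ] ℝ}
  {e : Z →L[ℝ] Z →L[ℝ] ℝ}

variable (b d e) in
noncomputable def schurComplement (ha : IsCoercive a) : Z →L[ℝ] Z →L[ℝ] ℝ :=
  e + d.bilinearComp (ha.solve ∘L b) (ha.solve ∘L b)

omit [CompleteSpace Z] in
theorem schurComplement_apply (ha : IsCoercive a) (z y : Z) :
    schurComplement b d e ha z y = e z y + d (ha.solve (b z)) (ha.solve (b y)) := rfl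

omit [CompleteSpace Z] in
theorem isCoercive_schurComplement {ε : ℝ} (hε : 0 < ε) (he : ∀ z : Z, ε * ‖z‖ ^ 2 ≤ e z z)
    (hd₀ : ∀ u : U, 0 ≤ d u u) (ha : IsCoercive a) : IsCoercive (schurComplement b d e ha) :=
  ⟨ε, hε, fun z => by
    rw [schurComplement_apply, mul_assoc, ← sq]
    linarith [he z, hd₀ (ha.solve (b z))]⟩

theorem exists_isSaddlePoint (ha : IsCoercive a) (hs : IsCoercive (schurComplement b d e ha))
    (f : U →L[ℝ] ℝ) (g : U × Z →L[ℝ] ℝ) : ∃ u z p, IsSaddlePoint a b d e f g u z p := by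
  set W := ha.solve ∘L b
  have hW : ∀ z v, a (W z) v = b z v := fun z v => ha.apply_solve (b z) v
  set u₀ := ha.solve f
  set z := hs.solve (g ∘L inr ℝ U Z - g ∘L inl ℝ U Z ∘L W + d u₀ ∘L W)
  have hz : ∀ y, e z y + d (W z) (W y) = g (0, y) - g (W y, 0) + d u₀ (W y) :=
    fun y => by
      have h := hs.apply_solve (g ∘L inr ℝ U Z - g ∘L inl ℝ U Z ∘L W + d u₀ ∘L W) y
      simp only [schurComplement_apply, add_apply, sub_apply, comp_apply, inl_apply,
        inr_apply] at h
      exact h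
  set u := u₀ - W z
  set p := ha.flip.solve (g ∘L inl ℝ U Z - d u)
  have hp : ∀ v, a v p = g (v, 0) - d u v := fun v =>
    ha.flip.apply_solve (g ∘L inl ℝ U Z - d u) v
  refine ⟨u, z, p, fun v y => ?_, fun q => ?_⟩
  · have hg : g (v, y) = g (v, 0) + g (0, y) := by
      rw [← map_add, Prod.mk_add_mk, add_zero, zero_add]
    rw [← hW, hp, hp, hg]
    simp only [u, map_sub, sub_apply]
    linarith [hz y]
  · simp only [u, map_sub, sub_apply, ha.apply_solve, hW, u₀]
    ring

end Existence

/-- well-posedness of the saddle-point problem (Brezzi theory): unique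
solvability and a stability bound with a constant depending only on the continuity
constants of a,b,d,e and the coercivity constants of a,e. -/
theorem stmt2 (Ca Cb Cd Ce α ε : ℝ) (hα : 0 < α) (hε : 0 < ε) :
    ∃ C > 0, ∀ (U Z : Type)
      [NormedAddCommGroup U] [InnerProductSpace ℝ U] [CompleteSpace U]
      [NormedAddCommGroup Z] [InnerProductSpace ℝ Z] [CompleteSpace Z]
      (a : U →L[ℝ] U →L[ℝ] ℝ) (b : Z →L[ℝ] U →L[ℝ] ℝ)
      (d : U →L[ℝ] U →L[ℝ] ℝ) (e : Z →L[ℝ] Z →L[ℝ] ℝ)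
      (f : U →L[ℝ] ℝ) (g : U × Z →L[ℝ] ℝ),
      (∀ u v : U, |a u v| ≤ Ca * ‖u‖ * ‖v‖) →
      (∀ (z : Z) (v : U), |b z v| ≤ Cb * ‖z‖ * ‖v‖) →
      (∀ u v : U, |d u v| ≤ Cd * ‖u‖ * ‖v‖) →
      (∀ z y : Z, |e z y| ≤ Ce * ‖z‖ * ‖y‖) →
      (∀ u : U, α * ‖u‖ ^ 2 ≤ a u u) →
      (∀ z : Z, ε * ‖z‖ ^ 2 ≤ e z z) →
      (∀ u : U, 0 ≤ d u u) →
      (∃! w : U × Z × U,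
        (∀ (v : U) (y : Z),
          d w.1 v + e w.2.1 y + a v w.2.2 + b y w.2.2 = g (v, y)) ∧
        (∀ q : U, a w.1 q + b w.2.1 q = f q)) ∧
      (∀ w : U × Z × U,
        ((∀ (v : U) (y : Z),
          d w.1 v + e w.2.1 y + a v w.2.2 + b y w.2.2 = g (v, y)) ∧
         (∀ q : U, a w.1 q + b w.2.1 q = f q)) →
        ‖w.1‖ + ‖w.2.1‖ + ‖w.2.2‖ ≤ C * (‖f‖ + ‖g‖)) := by
  set k := max (max Cb Cd) 0
  have hk : 0 ≤ k := le_max_right _ _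
  refine ⟨stabilityConst α ε k, stabilityConst_pos hα hε hk,
    fun U Z _ _ _ _ _ _ a b d e f g _ hb hd _ ha he hd₀ => ?_⟩
  have hbk : ∀ (z : Z) (v : U), |b z v| ≤ k * ‖z‖ * ‖v‖ := fun z v =>
    (hb z v).trans (by gcongr; exact le_max_of_le_left (le_max_left _ _))
  have hdk : ∀ u v : U, |d u v| ≤ k * ‖u‖ * ‖v‖ := fun u v =>
    (hd u v).trans (by gcongr; exact le_max_of_le_left (le_max_right _ _))
  have hstab : ∀ (f : U →L[ℝ] ℝ) (g : U × Z →L[ℝ] ℝ) u z p, IsSaddlePoint a b d e f g u z p →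
      ‖u‖ + ‖z‖ + ‖p‖ ≤ stabilityConst α ε k * (‖f‖ + ‖g‖) :=
    fun _ _ _ _ _ h => h.norm_add_add_le hα hε hk hbk hdk ha he hd₀
  have ha' : IsCoercive a := ⟨α, hα, fun u => by rw [mul_assoc, ← sq]; exact ha u⟩
  obtain ⟨u, z, p, h⟩ :=
    exists_isSaddlePoint ha' (isCoercive_schurComplement hε he hd₀ ha') f g
  exact ⟨⟨(u, z, p), h, fun w hw => IsSaddlePoint.eq_of_stability hstab hw h⟩,
    fun w hw => hstab f g _ _ _ hw⟩
end

section
/- Let U, L, W, Z be Hilbert spaces with i: Z → L bounded linear. Let G ∈ L(U,L) be an isomorphism, F ∈ L(U,W), ρ>0, and consider the a posteriori error identity: for the exact saddle-point solution (u,z,p) and any approximation (u^δ,z^δ,p^δ) ∈ U×Z×U, the squared error ‖u−u^δ‖²_U + ‖z−z^δ‖²_Z + ‖p−p^δ‖²_U is equivalent (with constants depending only on the stability constants) to R₁² + R₂² + R₃², where R₁ := sup_{0≠v∈U} (⟨Fv, w*−Fu^δ⟩_W − ⟨Gv, Gp^δ⟩_L)/‖v‖_U, R₂ := ‖f* + z^δ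 − Gu^δ‖_L, and R₃ := ‖Π G p^δ − ρ C z^δ‖_{Z'}. -/
/-!
The residuals are the saddle-point operator applied to the error `(u - uδ, z - zδ, p - pδ)`, so
the upper bound on the residuals is just boundedness of that operator. For the converse, testing
the error equations with `(eu, ez, -ep)` gives the energy identity
`ρ ‖ez‖² + ‖F eu‖² = ⟪r_U, eu⟫ - ⟪r_L, G ep⟫ + r_Z ez`. Invertibility of `G` bounds `‖eu‖` by
`r_L` and `‖ez‖`, and `‖G ep‖` by `r_U` and `‖eu‖`; inserting these linear bounds into the energy
identity leaves a quadratic inequality for `‖ez‖`.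
-/

open RealInnerProductSpace

theorem sum_sq_le_of_sum_le {x₁ x₂ x₃ y₁ y₂ y₃ c : ℝ} (hx₁ : 0 ≤ x₁) (hx₂ : 0 ≤ x₂)
    (hx₃ : 0 ≤ x₃) (h : x₁ + x₂ + x₃ ≤ c * (y₁ + y₂ + y₃)) :
    x₁ ^ 2 + x₂ ^ 2 + x₃ ^ 2 ≤ 3 * c ^ 2 * (y₁ ^ 2 + y₂ ^ 2 + y₃ ^ 2) := by
  have hsum : 0 ≤ x₁ + x₂ + x₃ := by positivity
  calc x₁ ^ 2 + x₂ ^ 2 + x₃ ^ 2 ≤ (x₁ + x₂ + x₃) ^ 2 := by nlinarith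
    _ ≤ (c * (y₁ + y₂ + y₃)) ^ 2 := pow_le_pow_left₀ hsum h 2
    _ = c ^ 2 * (y₁ + y₂ + y₃) ^ 2 := by ring
    _ ≤ c ^ 2 * (3 * (y₁ ^ 2 + y₂ ^ 2 + y₃ ^ 2)) := by
      gcongr; nlinarith [sq_nonneg (y₁ - y₂), sq_nonneg (y₁ - y₃), sq_nonneg (y₂ - y₃)]
    _ = 3 * c ^ 2 * (y₁ ^ 2 + y₂ ^ 2 + y₃ ^ 2) := by ring

theorem mul_add_mul_add_mul_le {a b c x y z : ℝ} (ha : 0 ≤ a) (hb : 0 ≤ b) (hc : 0 ≤ c)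
    (hx : 0 ≤ x) (hy : 0 ≤ y) (hz : 0 ≤ z) :
    a * x + b * y + c * z ≤ (a + b + c) * (x + y + z) := by
  nlinarith [mul_nonneg ha hy, mul_nonneg ha hz, mul_nonneg hb hx, mul_nonneg hb hz,
    mul_nonneg hc hx, mul_nonneg hc hy]

theorem le_of_sq_le_mul {x c : ℝ} (hc : 0 ≤ c) (h : x ^ 2 ≤ c * x) : x ≤ c := by
  nlinarith

theorem le_mul_of_mul_sq_le {ρ a b E S : ℝ} (hρ : 0 < ρ) (ha : 0 ≤ a) (hb : 0 ≤ b)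
    (hS : 0 ≤ S) (h : ρ * E ^ 2 ≤ S * (a * S + b * E)) :
    E ≤ (1 + (a + b) / ρ) * S := by
  have hab : 0 ≤ (a + b) / ρ * S := by positivity
  rcases le_or_gt E S with hES | hSE
  · linarith
  · have : ρ * E * E ≤ (a + b) * S * E := by nlinarith [mul_le_mul_of_nonneg_left hSE.le hS]
    have : E ≤ (a + b) / ρ * S := by
      rw [div_mul_eq_mul_div, le_div_iff₀ hρ]; nlinarith [hS.trans_lt hSE]
    linarith

theorem exists_sum_le_of_saddle_bounds {ρ γ κ φ : ℝ} (hρ : 0 < ρ) (hγ : 0 ≤ γ) (hκ : 0 ≤ κ) :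
    ∃ c > 0, ∀ A B E P r₁ r₂ r₃ : ℝ, 0 ≤ A → 0 ≤ B → 0 ≤ E → 0 ≤ r₁ → 0 ≤ r₂ → 0 ≤ r₃ →
      A ≤ γ * (r₂ + κ * E) → B ≤ γ * (r₁ + φ ^ 2 * A) → P ≤ γ * B →
      ρ * E ^ 2 ≤ r₁ * A + r₂ * B + r₃ * E → A + E + P ≤ c * (r₁ + r₂ + r₃) := by
  set cE := 1 + ((2 * γ + γ ^ 2 * φ ^ 2) + (1 + γ * κ + γ ^ 2 * φ ^ 2 * κ)) / ρ
  have hcE : 0 < cE := by positivity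
  refine ⟨γ + γ ^ 2 + γ ^ 3 * φ ^ 2 + (1 + γ * κ + γ ^ 3 * φ ^ 2 * κ) * cE, by positivity, ?_⟩
  intro A B E P r₁ r₂ r₃ hA0 hB0 hE0 hr₁ hr₂ hr₃ hA hB hP henergy
  set S := r₁ + r₂ + r₃
  have hS : 0 ≤ S := by positivity
  have hA' : A ≤ γ * S + γ * κ * E := by nlinarith
  have hB' : B ≤ (γ + γ ^ 2 * φ ^ 2) * S + γ ^ 2 * φ ^ 2 * κ * E := by
    nlinarith [mul_le_mul_of_nonneg_left hA' (by positivity : 0 ≤ γ * φ ^ 2)]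
  have hE : E ≤ cE * S := by
    refine le_mul_of_mul_sq_le hρ (by positivity) (by positivity) hS ?_
    nlinarith [mul_le_mul_of_nonneg_left hA' hr₁, mul_le_mul_of_nonneg_left hB' hr₂]
  nlinarith [mul_le_mul_of_nonneg_left hE (by positivity : 0 ≤ 1 + γ * κ + γ ^ 3 * φ ^ 2 * κ),
    mul_le_mul_of_nonneg_left hB' hγ]

theorem ContinuousLinearEquiv.norm_le_norm_symm_mul {E F : Type*} [NormedAddCommGroup E]
    [NormedSpace ℝ E] [NormedAddCommGroup F] [NormedSpace ℝ F] (G : E ≃L[ℝ] F) (x : E) :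
    ‖x‖ ≤ ‖(G.symm : F →L[ℝ] E)‖ * ‖G x‖ := by
  simpa using (G.symm : F →L[ℝ] E).le_opNorm (G x)

namespace SaddlePoint

open ContinuousLinearMap

variable {U L W Z : Type*}
  [NormedAddCommGroup U] [InnerProductSpace ℝ U]
  [NormedAddCommGroup L] [InnerProductSpace ℝ L]
  [NormedAddCommGroup W] [InnerProductSpace ℝ W]
  [NormedAddCommGroup Z] [InnerProductSpace ℝ Z]
  (i : Z →L[ℝ] L) (G : U ≃L[ℝ] L) (F : U →L[ℝ] W) (ρ : ℝ)

/- `residualU`, `residualL` and `residualZ` are the three components of the saddle-point operator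
applied to an error `(eu, ez, ep)`. -/

def residualL (eu : U) (ez : Z) : L := G eu - i ez

noncomputable def residualZ (ez : Z) (ep : U) : Z →L[ℝ] ℝ :=
  ρ • innerSL ℝ ez - (innerSL ℝ (G ep)).comp i

theorem residualZ_apply (ez : Z) (ep : U) (y : Z) :
    residualZ i G ρ ez ep y = ρ * ⟪ez, y⟫ - ⟪G ep, i y⟫ := by
  simp [residualZ]

theorem norm_residualL_le (eu : U) (ez : Z) :
    ‖residualL i G eu ez‖ ≤ ‖(G : U →L[ℝ] L)‖ * ‖eu‖ + ‖i‖ * ‖ez‖ :=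
  (norm_sub_le _ _).trans (add_le_add ((G : U →L[ℝ] L).le_opNorm eu) (i.le_opNorm ez))

theorem norm_residualZ_le (ez : Z) (ep : U) :
    ‖residualZ i G ρ ez ep‖ ≤ |ρ| * ‖ez‖ + ‖(G : U →L[ℝ] L)‖ * ‖i‖ * ‖ep‖ := by
  refine (norm_sub_le _ _).trans (add_le_add ?_ ?_)
  · rw [norm_smul, innerSL_apply_norm, Real.norm_eq_abs]
  · calc ‖(innerSL ℝ (G ep)).comp i‖ ≤ ‖G ep‖ * ‖i‖ := by
          simpa only [innerSL_apply_norm] using opNorm_comp_le (innerSL ℝ (G ep)) i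
      _ ≤ ‖(G : U →L[ℝ] L)‖ * ‖ep‖ * ‖i‖ := by gcongr; exact (G : U →L[ℝ] L).le_opNorm ep
      _ = _ := by ring

theorem norm_le_of_residualL (eu : U) (ez : Z) :
    ‖eu‖ ≤ ‖(G.symm : L →L[ℝ] U)‖ * (‖residualL i G eu ez‖ + ‖i‖ * ‖ez‖) := by
  have hGeu : G eu = residualL i G eu ez + i ez := by simp [residualL]
  calc ‖eu‖ ≤ ‖(G.symm : L →L[ℝ] U)‖ * ‖G eu‖ := G.norm_le_norm_symm_mul eu
    _ ≤ _ := by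
      gcongr
      rw [hGeu]
      exact (norm_add_le _ _).trans (by gcongr; exact i.le_opNorm ez)

theorem residualL_sub_eq {u : U} {z : Z} {fstar : L}
    (h : ∀ q, ⟪G u, G q⟫ - ⟪i z, G q⟫ = ⟪fstar, G q⟫) (uδ : U) (zδ : Z) :
    residualL i G (u - uδ) (z - zδ) = fstar + i zδ - G uδ := by
  have hfstar : fstar = G u - i z := ext_inner_right ℝ fun w => by
    obtain ⟨q, rfl⟩ := G.surjective w
    rw [inner_sub_left, h]
  rw [residualL, hfstar, map_sub, map_sub]
  abel

theorem residualZ_sub_eq {z : Z} {p : U} (C : Z → L) (hC : ∀ z y : Z, ⟪z, y⟫ = ⟪C z, i y⟫)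
    (h : ∀ y, ρ * ⟪z, y⟫ = ⟪i y, G p⟫) (zδ : Z) (pδ : U) :
    residualZ i G ρ (z - zδ) (p - pδ) = (innerSL ℝ (G pδ - ρ • C zδ)).comp i := by
  ext y
  rw [residualZ_apply, comp_apply, innerSL_apply_apply, map_sub, inner_sub_left, inner_sub_left,
    inner_sub_left, real_inner_smul_left, ← hC]
  linarith [h y, real_inner_comm (i y) (G p)]

variable [CompleteSpace U] [CompleteSpace L] [CompleteSpace W]

noncomputable def residualU (eu ep : U) : U :=
  adjoint F (F eu) + adjoint (G : U →L[ℝ] L) (G ep)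

theorem inner_residualU (eu ep v : U) :
    ⟪residualU G F eu ep, v⟫ = ⟪F eu, F v⟫ + ⟪G ep, G v⟫ := by
  simp only [residualU, inner_add_left, adjoint_inner_left, ContinuousLinearEquiv.coe_coe]

theorem norm_residualU_le (eu ep : U) :
    ‖residualU G F eu ep‖ ≤ ‖F‖ ^ 2 * ‖eu‖ + ‖(G : U →L[ℝ] L)‖ ^ 2 * ‖ep‖ := by
  have hF := (adjoint F ∘L F).le_opNorm eu
  have hG := (adjoint (G : U →L[ℝ] L) ∘L (G : U →L[ℝ] L)).le_opNorm ep
  rw [norm_adjoint_comp_self, ← sq] at hF hG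
  exact (norm_add_le _ _).trans (add_le_add hF hG)

theorem norm_apply_le_of_residualU (eu ep : U) :
    ‖G ep‖ ≤ ‖(G.symm : L →L[ℝ] U)‖ * (‖residualU G F eu ep‖ + ‖F‖ ^ 2 * ‖eu‖) := by
  set γ := ‖(G.symm : L →L[ℝ] U)‖
  have hFF : -⟪F eu, F ep⟫ ≤ ‖F‖ * ‖eu‖ * (‖F‖ * ‖ep‖) :=
    (neg_le_abs _).trans <| (abs_real_inner_le_norm _ _).trans <|
      mul_le_mul (F.le_opNorm eu) (F.le_opNorm ep) (norm_nonneg _) (by positivity)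
  have hP : ‖ep‖ ≤ γ * ‖G ep‖ := G.norm_le_norm_symm_mul ep
  refine le_of_sq_le_mul (by positivity) ?_
  calc ‖G ep‖ ^ 2 = ⟪residualU G F eu ep, ep⟫ - ⟪F eu, F ep⟫ := by
        rw [inner_residualU, real_inner_self_eq_norm_sq]; ring
    _ ≤ (‖residualU G F eu ep‖ + ‖F‖ ^ 2 * ‖eu‖) * ‖ep‖ := by
        nlinarith [real_inner_le_norm (residualU G F eu ep) ep]
    _ ≤ (‖residualU G F eu ep‖ + ‖F‖ ^ 2 * ‖eu‖) * (γ * ‖G ep‖) := by gcongr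
    _ = _ := by ring

theorem energy_identity (eu : U) (ez : Z) (ep : U) :
    ρ * ‖ez‖ ^ 2 + ‖F eu‖ ^ 2 = ⟪residualU G F eu ep, eu⟫ - ⟪residualL i G eu ez, G ep⟫
      + residualZ i G ρ ez ep ez := by
  rw [inner_residualU, residualZ_apply, residualL, inner_sub_left, real_inner_self_eq_norm_sq,
    real_inner_self_eq_norm_sq, real_inner_comm (G ep) (G eu), real_inner_comm (G ep) (i ez)]
  ring

theorem mul_norm_sq_le_residual_pairings (eu : U) (ez : Z) (ep : U) :
    ρ * ‖ez‖ ^ 2 ≤ ‖residualU G F eu ep‖ * ‖eu‖ + ‖residualL i G eu ez‖ * ‖G ep‖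
      + ‖residualZ i G ρ ez ep‖ * ‖ez‖ := by
  have hL := (neg_le_abs _).trans (abs_real_inner_le_norm (residualL i G eu ez) (G ep))
  have hZ := (le_abs_self _).trans ((residualZ i G ρ ez ep).le_opNorm ez)
  nlinarith [energy_identity i G F ρ eu ez ep, real_inner_le_norm (residualU G F eu ep) eu,
    sq_nonneg ‖F eu‖]

theorem residualU_sub_eq {u p : U} {wstar : W}
    (h : ∀ v, ⟪F u, F v⟫ + ⟪G v, G p⟫ = ⟪F v, wstar⟫) (uδ pδ : U) :
    residualU G F (u - uδ) (p - pδ)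
      = adjoint F (wstar - F uδ) - adjoint (G : U →L[ℝ] L) (G pδ) := by
  refine ext_inner_right ℝ fun v => ?_
  rw [inner_residualU, inner_sub_left, adjoint_inner_left, adjoint_inner_left, inner_sub_left,
    ContinuousLinearEquiv.coe_coe, map_sub, map_sub, inner_sub_left, inner_sub_left]
  linarith [h v, real_inner_comm (F v) wstar, real_inner_comm (G v) (G p)]

theorem sum_norm_residual_le (eu : U) (ez : Z) (ep : U) :
    ‖residualU G F eu ep‖ + ‖residualL i G eu ez‖ + ‖residualZ i G ρ ez ep‖
      ≤ (‖F‖ ^ 2 + ‖(G : U →L[ℝ] L)‖ + (‖i‖ + |ρ|)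
          + (‖(G : U →L[ℝ] L)‖ ^ 2 + ‖(G : U →L[ℝ] L)‖ * ‖i‖)) * (‖eu‖ + ‖ez‖ + ‖ep‖) := by
  calc _ ≤ (‖F‖ ^ 2 * ‖eu‖ + ‖(G : U →L[ℝ] L)‖ ^ 2 * ‖ep‖)
        + (‖(G : U →L[ℝ] L)‖ * ‖eu‖ + ‖i‖ * ‖ez‖)
        + (|ρ| * ‖ez‖ + ‖(G : U →L[ℝ] L)‖ * ‖i‖ * ‖ep‖) :=
        add_le_add_three (norm_residualU_le G F eu ep) (norm_residualL_le i G eu ez)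
          (norm_residualZ_le i G ρ ez ep)
    _ = (‖F‖ ^ 2 + ‖(G : U →L[ℝ] L)‖) * ‖eu‖ + (‖i‖ + |ρ|) * ‖ez‖
        + (‖(G : U →L[ℝ] L)‖ ^ 2 + ‖(G : U →L[ℝ] L)‖ * ‖i‖) * ‖ep‖ := by ring
    _ ≤ _ := mul_add_mul_add_mul_le (by positivity) (by positivity) (by positivity)
        (norm_nonneg _) (norm_nonneg _) (norm_nonneg _)

theorem exists_sum_norm_le_sum_norm_residual (hρ : 0 < ρ) :
    ∃ c > 0, ∀ (eu : U) (ez : Z) (ep : U), ‖eu‖ + ‖ez‖ + ‖ep‖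
      ≤ c * (‖residualU G F eu ep‖ + ‖residualL i G eu ez‖ + ‖residualZ i G ρ ez ep‖) := by
  obtain ⟨c, hc, hbound⟩ :=
    exists_sum_le_of_saddle_bounds (φ := ‖F‖) hρ (norm_nonneg (G.symm : L →L[ℝ] U)) (norm_nonneg i)
  exact ⟨c, hc, fun eu ez ep => hbound _ ‖G ep‖ _ _ _ _ _ (norm_nonneg _) (norm_nonneg _)
    (norm_nonneg _) (norm_nonneg _) (norm_nonneg _) (norm_nonneg _)
    (norm_le_of_residualL i G eu ez) (norm_apply_le_of_residualU G F eu ep)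
    (G.norm_le_norm_symm_mul ep) (mul_norm_sq_le_residual_pairings i G F ρ eu ez ep)⟩

end SaddlePoint

theorem stmt14_general
    {U L W Z : Type*}
    [NormedAddCommGroup U] [InnerProductSpace ℝ U] [CompleteSpace U]
    [NormedAddCommGroup L] [InnerProductSpace ℝ L] [CompleteSpace L]
    [NormedAddCommGroup W] [InnerProductSpace ℝ W] [CompleteSpace W]
    [NormedAddCommGroup Z] [InnerProductSpace ℝ Z]
    (i : Z →L[ℝ] L)
    (G : U ≃L[ℝ] L) (F : U →L[ℝ] W) (fstar : L) (wstar : W)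
    (ρ : ℝ) (hρ : 0 < ρ)
    (C : Z →L[ℝ] L) (hC : ∀ z y : Z, ⟪z, y⟫ = ⟪C z, i y⟫)
    -- exact saddle-point solution
    (u : U) (z : Z) (p : U)
    (h1 : ∀ (v : U) (y : Z),
      ⟪F u, F v⟫ + ρ * ⟪z, y⟫ + ⟪G v, G p⟫ - ⟪i y, G p⟫ = ⟪F v, wstar⟫)
    (h2 : ∀ q : U, ⟪G u, G q⟫ - ⟪i z, G q⟫ = ⟪fstar, G q⟫) :
    ∃ c₁ > 0, ∃ c₂ > 0, ∀ (uδ : U) (zδ : Z) (pδ : U),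
      c₁ * (‖ContinuousLinearMap.adjoint F (wstar - F uδ)
              - ContinuousLinearMap.adjoint (G : U →L[ℝ] L) (G pδ)‖ ^ 2
            + ‖fstar + i zδ - G uδ‖ ^ 2
            + ‖(innerSL ℝ (G pδ - ρ • C zδ)).comp i‖ ^ 2)
        ≤ ‖u - uδ‖ ^ 2 + ‖z - zδ‖ ^ 2 + ‖p - pδ‖ ^ 2 ∧
      ‖u - uδ‖ ^ 2 + ‖z - zδ‖ ^ 2 + ‖p - pδ‖ ^ 2
        ≤ c₂ * (‖ContinuousLinearMap.adjoint F (wstar - F uδ)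
              - ContinuousLinearMap.adjoint (G : U →L[ℝ] L) (G pδ)‖ ^ 2
            + ‖fstar + i zδ - G uδ‖ ^ 2
            + ‖(innerSL ℝ (G pδ - ρ • C zδ)).comp i‖ ^ 2) := by
  obtain ⟨cs, hcs, hstab⟩ := SaddlePoint.exists_sum_norm_le_sum_norm_residual i G F ρ hρ
  have hu : ∀ v, ⟪F u, F v⟫ + ⟪G v, G p⟫ = ⟪F v, wstar⟫ := fun v => by simpa using h1 v 0
  have hz : ∀ y, ρ * ⟪z, y⟫ = ⟪i y, G p⟫ := fun y => by
    simpa [sub_eq_zero] using h1 0 y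
  set K := ‖F‖ ^ 2 + ‖(G : U →L[ℝ] L)‖ + (‖i‖ + |ρ|)
    + (‖(G : U →L[ℝ] L)‖ ^ 2 + ‖(G : U →L[ℝ] L)‖ * ‖i‖)
  refine ⟨(3 * K ^ 2 + 1)⁻¹, by positivity, 3 * cs ^ 2, by positivity, fun uδ zδ pδ => ?_⟩
  rw [← SaddlePoint.residualU_sub_eq G F hu, ← SaddlePoint.residualL_sub_eq i G h2,
    ← SaddlePoint.residualZ_sub_eq i G ρ C hC hz]
  constructor
  · rw [inv_mul_le_iff₀ (by positivity)]
    have hres := sum_sq_le_of_sum_le (norm_nonneg _) (norm_nonneg _) (norm_nonneg _)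
      (SaddlePoint.sum_norm_residual_le i G F ρ (u - uδ) (z - zδ) (p - pδ))
    linarith [sq_nonneg ‖u - uδ‖, sq_nonneg ‖z - zδ‖, sq_nonneg ‖p - pδ‖]
  · exact sum_sq_le_of_sum_le (norm_nonneg _) (norm_nonneg _) (norm_nonneg _) (hstab _ _ _)

/-- a posteriori error equivalence for the optimal-control saddle-point
problem: the squared error of any approximation (u^δ,z^δ,p^δ) is equivalent to
R₁²+R₂²+R₃², where (by Riesz representation) R₁ = ‖F*(w*−Fu^δ) − G*Gp^δ‖_U is the dual
norm of v ↦ ⟨Fv,w*−Fu^δ⟩−⟨Gv,Gp^δ⟩, R₂ = ‖f*+z^δ−Gu^δ‖_L, and R₃ the Z'-norm of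
ΠGp^δ−ρCz^δ, i.e. the norm of the functional y ↦ ⟨Gp^δ−ρCz^δ, iy⟩ on Z (the projection
Π may be dropped in the pairing against iy ∈ L̂). -/
theorem stmt14
    {U L W Z : Type*}
    [NormedAddCommGroup U] [InnerProductSpace ℝ U] [CompleteSpace U]
    [NormedAddCommGroup L] [InnerProductSpace ℝ L] [CompleteSpace L]
    [NormedAddCommGroup W] [InnerProductSpace ℝ W] [CompleteSpace W]
    [NormedAddCommGroup Z] [InnerProductSpace ℝ Z] [CompleteSpace Z]
    (i : Z →L[ℝ] L) (hi : Function.Injective i)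
    (G : U ≃L[ℝ] L) (F : U →L[ℝ] W) (fstar : L) (wstar : W)
    (ρ : ℝ) (hρ : 0 < ρ)
    (C : Z →L[ℝ] L) (hC : ∀ z y : Z, ⟪z, y⟫ = ⟪C z, i y⟫)
    -- exact saddle-point solution
    (u : U) (z : Z) (p : U)
    (h1 : ∀ (v : U) (y : Z),
      ⟪F u, F v⟫ + ρ * ⟪z, y⟫ + ⟪G v, G p⟫ - ⟪i y, G p⟫ = ⟪F v, wstar⟫)
    (h2 : ∀ q : U, ⟪G u, G q⟫ - ⟪i z, G q⟫ = ⟪fstar, G q⟫) :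
    ∃ c₁ > 0, ∃ c₂ > 0, ∀ (uδ : U) (zδ : Z) (pδ : U),
      c₁ * (‖ContinuousLinearMap.adjoint F (wstar - F uδ)
              - ContinuousLinearMap.adjoint (G : U →L[ℝ] L) (G pδ)‖ ^ 2
            + ‖fstar + i zδ - G uδ‖ ^ 2
            + ‖(innerSL ℝ (G pδ - ρ • C zδ)).comp i‖ ^ 2)
        ≤ ‖u - uδ‖ ^ 2 + ‖z - zδ‖ ^ 2 + ‖p - pδ‖ ^ 2 ∧
      ‖u - uδ‖ ^ 2 + ‖z - zδ‖ ^ 2 + ‖p - pδ‖ ^ 2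
        ≤ c₂ * (‖ContinuousLinearMap.adjoint F (wstar - F uδ)
              - ContinuousLinearMap.adjoint (G : U →L[ℝ] L) (G pδ)‖ ^ 2
            + ‖fstar + i zδ - G uδ‖ ^ 2
            + ‖(innerSL ℝ (G pδ - ρ • C zδ)).comp i‖ ^ 2) :=
  stmt14_general i G F fstar wstar ρ hρ C hC u z p h1 h2
end
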